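/- Let F : M^op → vect_F be a pointwise finite-dimensional sequentially continuous functor and let G ↪ F be a proper subfunctor (the inclusion is pointwise, and proper at some point). Then there exists a point w ∈ M and a natural epimorphism ρ : F → S_w onto the simple functor S_w at w such that ρ restricted to G is zero. -/

import Mathlib

open CategoryTheory CategoryTheory.Limits Opposite

noncomputable section

/-- The strip `M ⊂ ℝᵒᵖ × ℝ` between the two lines of slope `-1` given by
`x + y = a` and `x + y = b`. -/
def Strip (a b : ℝ) : Type := {p : ℝ × ℝ // a ≤ p.1 + p.2 ∧ p.1 + p.2 ≤ b}

namespace Strip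

variable {a b : ℝ}

/-- The partial order inherited from `ℝᵒᵖ × ℝ`. -/
instance : PartialOrder (Strip a b) where
  le p q := q.1.1 ≤ p.1.1 ∧ p.1.2 ≤ q.1.2
  le_refl p := ⟨le_rfl, le_rfl⟩
  le_trans p q r h h' := ⟨le_trans h'.1 h.1, le_trans h.2 h'.2⟩
  le_antisymm p q h h' :=
    Subtype.ext (Prod.ext (le_antisymm h'.1 h.1) (le_antisymm h.2 h'.2))

lemma le_def {p q : Strip a b} : p ≤ q ↔ q.1.1 ≤ p.1.1 ∧ p.1.2 ≤ q.1.2 := Iff.rfl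

/-- The glide reflection `T`. -/
def glide (p : Strip a b) : Strip a b :=
  ⟨(a - p.1.2, b - p.1.1), by
    obtain ⟨h1, h2⟩ := p.2; constructor <;> dsimp <;> linarith⟩

/-- The glide reflection `T` as an order isomorphism of `M`. -/
def glideEquiv : Strip a b ≃o Strip a b where
  toFun := glide
  invFun p := ⟨(b - p.1.2, a - p.1.1), by
    obtain ⟨h1, h2⟩ := p.2; constructor <;> dsimp <;> linarith⟩
  left_inv p := Subtype.ext (by simp [glide])
  right_inv p := Subtype.ext (by simp [glide])
  map_rel_iff' {p q} := by
    show (glide p ≤ glide q) ↔ _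
    simp only [le_def, glide]
    constructor <;> rintro ⟨h1, h2⟩ <;> exact ⟨by linarith, by linarith⟩

lemma glideEquiv_coords (p : Strip a b) :
    (glideEquiv p).1 = (a - p.1.2, b - p.1.1) := rfl

lemma glideEquiv_symm_coords (p : Strip a b) :
    (glideEquiv.symm p).1 = (b - p.1.2, a - p.1.1) := rfl

/-- The boundary `∂M = l₀ ∪ l₁`. -/
def OnBoundary (p : Strip a b) : Prop := p.1.1 + p.1.2 = a ∨ p.1.1 + p.1.2 = b

/-- The interior `int M`. -/
def InInterior (p : Strip a b) : Prop := a < p.1.1 + p.1.2 ∧ p.1.1 + p.1.2 < b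

/-- `u` belongs to `(↓v) ∩ int(↑ T⁻¹ v)`, the support of the contravariant block `B_v`;
equivalently, `v ∈ (↑u) ∩ int(↓ T u)`. -/
def BlockCond (v u : Strip a b) : Prop :=
  u ≤ v ∧ u.1.1 < b - v.1.2 ∧ a - v.1.1 < u.1.2

lemma blockCond_convex {v u u' u'' : Strip a b} (h1 : u ≤ u') (h2 : u' ≤ u'')
    (hu : BlockCond v u) (hu'' : BlockCond v u'') : BlockCond v u' :=
  ⟨le_trans h2 hu''.1, lt_of_le_of_lt h1.1 hu.2.1, lt_of_lt_of_le hu.2.2 h1.2⟩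

lemma simpleCond_convex {w u u' u'' : Strip a b} (h1 : u ≤ u') (h2 : u' ≤ u'')
    (hu : u = w) (hu'' : u'' = w) : u' = w :=
  le_antisymm (hu'' ▸ h2) (hu ▸ h1)

variable (a b) in
/-- An axis-aligned rectangle in `M` with corners `u ≤ v ≤ w` and remaining corner on `l₁`. -/
def IsCohomRect (u v w : Strip a b) : Prop :=
  u ≤ v ∧ v ≤ w ∧
    ((v.1.1 = u.1.1 ∧ v.1.2 = w.1.2 ∧ w.1.1 + u.1.2 = b) ∨
     (v.1.1 = w.1.1 ∧ v.1.2 = u.1.2 ∧ u.1.1 + w.1.2 = b))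

lemma IsCohomRect.w_le_glide {u v w : Strip a b} (h : IsCohomRect a b u v w) :
    w ≤ glideEquiv u := by
  obtain ⟨h1, h2, h3⟩ := h
  have hu := u.2; have hv := v.2; have hw := w.2
  obtain ⟨hle1, hle2⟩ := h1; obtain ⟨hle3, hle4⟩ := h2
  rw [le_def]
  rcases h3 with ⟨e1, e2, e3⟩ | ⟨e1, e2, e3⟩ <;>
    exact ⟨by rw [glideEquiv_coords]; dsimp; linarith,
           by rw [glideEquiv_coords]; dsimp; linarith⟩

lemma IsCohomRect.glideInv_le {u v w : Strip a b} (h : IsCohomRect a b u v w) :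
    glideEquiv.symm w ≤ u := by
  have := h.w_le_glide
  have h2 := glideEquiv.symm.monotone this
  simpa using h2

end Strip

section Functors

open Strip

variable (a b : ℝ) (K : Type) [Field K]

attribute [local instance] Classical.propDecidable

/-- auxiliary linear map used for the internal maps of `condFunctor`. -/
def condMap (P : Strip a b → Prop) (u u' : Strip a b) :
    ((PLift (P u') → K) →ₗ[K] (PLift (P u) → K)) where
  toFun f _ := if h' : P u' then f ⟨h'⟩ else 0
  map_add' f g := by funext h; by_cases h' : P u' <;> simp [h']
  map_smul' c f := by funext h; by_cases h' : P u' <;> simp [h']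

@[simp] lemma condMap_apply (P : Strip a b → Prop) (u u' : Strip a b)
    (f : PLift (P u') → K) (h : PLift (P u)) :
    condMap a b K P u u' f h = if h' : P u' then f ⟨h'⟩ else 0 := rfl

/-- A functor `Mᵒᵖ ⥤ Vect_K` supported on the set of points satisfying `P`,
with internal maps the identity wherever possible.  Both the contravariant blocks `B_v`
and the simple functors `S_w` arise this way. -/
def condFunctor (P : Strip a b → Prop)
    (hconv : ∀ ⦃u u' u'' : Strip a b⦄, u ≤ u' → u' ≤ u'' → P u → P u'' → P u') :
    (Strip a b)ᵒᵖ ⥤ ModuleCat K where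
  obj u := ModuleCat.of K (PLift (P u.unop) → K)
  map {x y} f := ModuleCat.ofHom (condMap a b K P y.unop x.unop)
  map_id x := by
    apply ModuleCat.hom_ext; apply LinearMap.ext; intro f
    funext h
    show (if h' : P x.unop then f ⟨h'⟩ else 0) = f h
    rw [dif_pos h.down]
  map_comp {x y z} f g := by
    apply ModuleCat.hom_ext; apply LinearMap.ext; intro v
    funext h
    show (if h' : P x.unop then v ⟨h'⟩ else 0)
        = condMap a b K P z.unop y.unop (condMap a b K P y.unop x.unop v) h
    by_cases hx : P x.unop
    · have hy : P y.unop := hconv (leOfHom g.unop) (leOfHom f.unop) h.down hx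
      simp [hx, hy]
    · by_cases hy : P y.unop <;> simp [hx, hy]

/-- The contravariant block `B_v`. -/
def Block (v : Strip a b) : (Strip a b)ᵒᵖ ⥤ ModuleCat K :=
  condFunctor a b K (BlockCond v) (fun _ _ _ h1 h2 hu hu'' => blockCond_convex h1 h2 hu hu'')

/-- The simple functor `S_w`. -/
def SimpleF (w : Strip a b) : (Strip a b)ᵒᵖ ⥤ ModuleCat K :=
  condFunctor a b K (fun u => u = w) (fun _ _ _ h1 h2 hu hu'' => simpleCond_convex h1 h2 hu hu'')

variable {a b K}

/-- The structure map `G(y) → G(x)` of a functor, for `x ≤ y` in `M`. -/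
def seqMap (G : (Strip a b)ᵒᵖ ⥤ ModuleCat K) {x y : Strip a b} (h : x ≤ y) :
    G.obj (op y) ⟶ G.obj (op x) :=
  G.map (homOfLE h).op

variable (a b K)

/-- Pointwise finite-dimensionality. -/
def Pfd (G : (Strip a b)ᵒᵖ ⥤ ModuleCat K) : Prop :=
  ∀ u : Strip a b, FiniteDimensional K (G.obj (op u))

/-- Vanishing on the boundary `∂M`. -/
def VanishesOnBoundary (G : (Strip a b)ᵒᵖ ⥤ ModuleCat K) : Prop :=
  ∀ u : Strip a b, OnBoundary u → ∀ x : G.obj (op u), x = 0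

/-- Sequential continuity: for every increasing sequence `u_k` converging to `L`, the
natural map `G L → lim_k G (u k)` is an isomorphism; elementarily, every compatible
family lifts uniquely. -/
def SeqContinuousF (G : (Strip a b)ᵒᵖ ⥤ ModuleCat K) : Prop :=
  ∀ (u : ℕ → Strip a b) (hu : Monotone u) (L : Strip a b) (hle : ∀ k, u k ≤ L),
    Filter.Tendsto (fun k => (u k).1) Filter.atTop (nhds L.1) →
    ∀ x : ∀ k, G.obj (op (u k)),
      (∀ k, seqMap G (hu (Nat.le_succ k)) (x (k + 1)) = x k) →
      ∃! y : G.obj (op L), ∀ k, seqMap G (hle k) y = x k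

/-- Cohomologicality: the long sequences associated to axis-aligned rectangles with one
corner on `l₁` are exact. -/
def Cohomological (G : (Strip a b)ᵒᵖ ⥤ ModuleCat K) : Prop :=
  VanishesOnBoundary a b K G ∧
  ∀ (u v w : Strip a b) (h : IsCohomRect a b u v w) (n : ℤ),
    (Function.Exact
        (seqMap G (((glideEquiv ^ n : Strip a b ≃o Strip a b)).monotone h.w_le_glide))
        (seqMap G (((glideEquiv ^ n : Strip a b ≃o Strip a b)).monotone h.2.1))) ∧
    (Function.Exact
        (seqMap G (((glideEquiv ^ n : Strip a b ≃o Strip a b)).monotone h.2.1))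
        (seqMap G (((glideEquiv ^ n : Strip a b ≃o Strip a b)).monotone h.1))) ∧
    (Function.Exact
        (seqMap G (((glideEquiv ^ n : Strip a b ≃o Strip a b)).monotone h.1))
        (seqMap G (((glideEquiv ^ n : Strip a b ≃o Strip a b)).monotone h.glideInv_le)))

/-- Bounded above support: the support is contained in the downset `{y - x ≤ c}`. -/
def BddAboveSupport (G : (Strip a b)ᵒᵖ ⥤ ModuleCat K) : Prop :=
  ∃ c : ℝ, ∀ u : Strip a b, c < u.1.2 - u.1.1 → ∀ x : G.obj (op u), x = 0

/-- Membership in the category `𝒥` of pfd, cohomological, sequentially continuous functors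
with bounded above support. -/
def MemJ (G : (Strip a b)ᵒᵖ ⥤ ModuleCat K) : Prop :=
  Pfd a b K G ∧ Cohomological a b K G ∧ SeqContinuousF a b K G ∧ BddAboveSupport a b K G

/-- `𝒥`-presentability. -/
def JPresentable (G : (Strip a b)ᵒᵖ ⥤ ModuleCat K) : Prop :=
  ∃ (H P : (Strip a b)ᵒᵖ ⥤ ModuleCat K) (_ : MemJ a b K H) (_ : MemJ a b K P)
    (f : H ⟶ P) (g : P ⟶ G),
      (∀ u : (Strip a b)ᵒᵖ, Function.Exact (f.app u) (g.app u)) ∧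
      (∀ u : (Strip a b)ᵒᵖ, Function.Surjective (g.app u))

/-- The 0-th Betti function `β⁰(G) : int M → ℕ`, `u ↦ dim Nat(G, S_u)`. -/
def beta0 (G : (Strip a b)ᵒᵖ ⥤ ModuleCat K) (v : Strip a b) : ℕ :=
  if InInterior v then Module.finrank K (G ⟶ SimpleF a b K v) else 0

/-- Admissible Betti functions. -/
def AdmissibleBetti (β : Strip a b → ℕ) : Prop :=
  (∀ v, ¬ InInterior v → β v = 0) ∧
  (∃ c : ℝ, ∀ v : Strip a b, c < v.1.2 - v.1.1 → β v = 0) ∧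
  (∀ u : Strip a b, {v : Strip a b | BlockCond v u ∧ β v ≠ 0}.Finite)

/-- Admissible Euler functions. -/
def AdmissibleEuler (μ : Strip a b → ℤ) : Prop :=
  AdmissibleBetti a b (fun v => (μ v).natAbs)

end Functors

section More

open Strip DirectSum

variable (a b : ℝ) (K : Type) [Field K]

attribute [local instance] Classical.propDecidable

lemma condMap_comp (P : Strip a b → Prop)
    (hconv : ∀ ⦃u u' u'' : Strip a b⦄, u ≤ u' → u' ≤ u'' → P u → P u'' → P u')
    {u u' u'' : Strip a b} (h1 : u ≤ u') (h2 : u' ≤ u'') :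
    condMap a b K P u u'' =
      (condMap a b K P u u').comp (condMap a b K P u' u'') := by
  refine LinearMap.ext fun f => funext fun h => ?_
  by_cases hx : P u''
  · have hy : P u' := hconv h1 h2 h.down hx
    simp [hx, hy]
  · by_cases hy : P u' <;> simp [hx, hy]

/-- A direct sum of `condFunctor`s for an indexed family of supports. -/
def condSumFunctor (ι : Type) (P : ι → Strip a b → Prop)
    (hconv : ∀ i, ∀ ⦃u u' u'' : Strip a b⦄, u ≤ u' → u' ≤ u'' → P i u → P i u'' → P i u') :
    (Strip a b)ᵒᵖ ⥤ ModuleCat K where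
  obj u := ModuleCat.of K (⨁ i : ι, (PLift (P i u.unop) → K))
  map {x y} f := ModuleCat.ofHom
    (DFinsupp.mapRange.linearMap (fun i => condMap a b K (P i) y.unop x.unop))
  map_id x := by
    have e : (fun i => condMap a b K (P i) x.unop x.unop)
        = fun i : ι => (LinearMap.id : (PLift (P i x.unop) → K) →ₗ[K] _) := by
      funext i
      refine LinearMap.ext fun f => funext fun h => ?_
      show (if h' : P i x.unop then f ⟨h'⟩ else 0) = f h
      rw [dif_pos h.down]
    change ModuleCat.ofHom
      (DFinsupp.mapRange.linearMap fun i => condMap a b K (P i) x.unop x.unop) = _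
    rw [e, DFinsupp.mapRange.linearMap_id]
    rfl
  map_comp {x y z} f g := by
    have e : (fun i => condMap a b K (P i) z.unop x.unop)
        = fun i => (condMap a b K (P i) z.unop y.unop).comp
            (condMap a b K (P i) y.unop x.unop) := by
      funext i
      exact condMap_comp a b K (P i) (hconv i) (leOfHom g.unop) (leOfHom f.unop)
    change ModuleCat.ofHom
      (DFinsupp.mapRange.linearMap fun i => condMap a b K (P i) z.unop x.unop) = _
    rw [e, DFinsupp.mapRange.linearMap_comp]
    rfl

/-- The direct sum `⊕_{v} B_v^{m v}` of contravariant blocks with multiplicities `m`. -/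
def blockSum (m : Strip a b → ℕ) : (Strip a b)ᵒᵖ ⥤ ModuleCat K :=
  condSumFunctor a b K (Σ v : Strip a b, Fin (m v)) (fun s u => BlockCond s.1 u)
    (fun _ _ _ _ h1 h2 hu hu'' => blockCond_convex h1 h2 hu hu'')

/-- The pointwise direct sum of a sequence of functors. -/
def sumFunctor (Q : ℕ → (Strip a b)ᵒᵖ ⥤ ModuleCat K) :
    (Strip a b)ᵒᵖ ⥤ ModuleCat K where
  obj u := ModuleCat.of K (⨁ n : ℕ, (Q n).obj u)
  map {x y} f := ModuleCat.ofHom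
    (DFinsupp.mapRange.linearMap (fun n => ((Q n).map f).hom))
  map_id x := by
    have e : (fun n => ((Q n).map (𝟙 x)).hom)
        = fun n : ℕ => LinearMap.id := by
      funext n; rw [CategoryTheory.Functor.map_id]; rfl
    change ModuleCat.ofHom (DFinsupp.mapRange.linearMap
      fun n => ((Q n).map (𝟙 x)).hom) = _
    rw [e, DFinsupp.mapRange.linearMap_id]
    rfl
  map_comp {x y z} f g := by
    have e : (fun n => ((Q n).map (f ≫ g)).hom)
        = fun n => (((Q n).map g).hom.comp
            ((Q n).map f).hom) := by
      funext n; rw [CategoryTheory.Functor.map_comp]; rfl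
    change ModuleCat.ofHom (DFinsupp.mapRange.linearMap
      fun n => ((Q n).map (f ≫ g)).hom) = _
    rw [e, DFinsupp.mapRange.linearMap_comp]
    rfl

/-- Precomposition with the glide reflection `T`, as an endofunctor of `Mᵒᵖ`. -/
def Tfun : (Strip a b)ᵒᵖ ⥤ (Strip a b)ᵒᵖ :=
  ((glideEquiv (a := a) (b := b)).monotone.functor).op

/-- A resolution of `G` by functors in `𝒥` (hence a projective resolution in `𝒞`). -/
def IsJResolution (G : (Strip a b)ᵒᵖ ⥤ ModuleCat K)
    (P : ℕ → (Strip a b)ᵒᵖ ⥤ ModuleCat K)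
    (d : ∀ n, P (n + 1) ⟶ P n) (ε : P 0 ⟶ G) : Prop :=
  (∀ n, MemJ a b K (P n)) ∧
  (∀ u, Function.Surjective ((ε.app u))) ∧
  (∀ u, Function.Exact ((d 0).app u) (ε.app u)) ∧
  (∀ n u, Function.Exact ((d (n + 1)).app u) ((d n).app u))

/-- Equivariance of a resolution: `P (n+3) = P n ∘ T` and `d (n+3) = - d n ∘ T`. -/
def IsEquivariantRes (P : ℕ → (Strip a b)ᵒᵖ ⥤ ModuleCat K)
    (d : ∀ n, P (n + 1) ⟶ P n) : Prop :=
  ∃ hEq : ∀ n, P (n + 3) = Tfun a b ⋙ P n,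
    ∀ n, d (n + 3) =
      eqToHom (hEq (n + 1)) ≫ (-(Functor.whiskerLeft (Tfun a b) (d n))) ≫ eqToHom (hEq n).symm

/-- The cochain complex `Nat(P_•, S_v)` obtained by applying `Nat(-, S_v)` to a resolution. -/
def dStar (P : ℕ → (Strip a b)ᵒᵖ ⥤ ModuleCat K) (d : ∀ n, P (n + 1) ⟶ P n)
    (v : Strip a b) (n : ℕ) :
    (P n ⟶ SimpleF a b K v) →ₗ[K] (P (n + 1) ⟶ SimpleF a b K v) :=
  Linear.leftComp K (SimpleF a b K v) (d n)

/-- `dim_K Extⁿ_𝒞(G, S_v)`, computed as the `n`-th cohomology of `Nat(P_•, S_v)` for a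
projective resolution `P_•` of `G` in `𝒞`. -/
def extDim (P : ℕ → (Strip a b)ᵒᵖ ⥤ ModuleCat K) (d : ∀ n, P (n + 1) ⟶ P n)
    (v : Strip a b) : ℕ → ℕ
  | 0 => Module.finrank K (LinearMap.ker (dStar a b K P d v 0))
  | (n + 1) =>
      Module.finrank K
        (↥(LinearMap.ker (dStar a b K P d v (n + 1))) ⧸
          Submodule.comap (LinearMap.ker (dStar a b K P d v (n + 1))).subtype
            (LinearMap.range (dStar a b K P d v n)))

/-- The partial alternating sum `Σ_{n < N} (-1)ⁿ dim Extⁿ(F, S_v)`. -/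
def eulerAt (P : ℕ → (Strip a b)ᵒᵖ ⥤ ModuleCat K) (d : ∀ n, P (n + 1) ⟶ P n)
    (v : Strip a b) (N : ℕ) : ℤ :=
  ∑ n ∈ Finset.range N, (-1 : ℤ) ^ n * (extDim a b K P d v n : ℤ)

/-- Objects of `𝒥`. -/
def JObj : Type 1 := {G : (Strip a b)ᵒᵖ ⥤ ModuleCat.{0} K // MemJ a b K G}

/-- Objects of `pres(𝒥)`. -/
def PresObj : Type 1 := {G : (Strip a b)ᵒᵖ ⥤ ModuleCat.{0} K // JPresentable a b K G}

/-- Relations defining `K₀` of `𝒥`: `[Q] = [P] + [R]` for every (automatically split)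
short exact sequence `0 → P → Q → R → 0` in `𝒥`. -/
def K0JRelations : Set (FreeAbelianGroup (JObj a b K)) :=
  {x | ∃ (P Q R : JObj a b K) (κ : P.1 ⟶ Q.1) (ρ : Q.1 ⟶ R.1),
    (∀ u, Function.Injective (κ.app u)) ∧ (∀ u, Function.Surjective (ρ.app u)) ∧
    (∀ u, Function.Exact (κ.app u) (ρ.app u)) ∧
    x = FreeAbelianGroup.of Q - FreeAbelianGroup.of P - FreeAbelianGroup.of R}

/-- The Grothendieck group `K₀(𝒥)`. -/
def K0J : Type 1 :=
  FreeAbelianGroup (JObj a b K) ⧸ AddSubgroup.closure (K0JRelations a b K)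

instance : AddCommGroup (K0J a b K) := by unfold K0J; infer_instance

/-- The class `[G] ∈ K₀(𝒥)`. -/
def K0Jmk (G : JObj a b K) : K0J a b K :=
  QuotientAddGroup.mk (FreeAbelianGroup.of G)

/-- Relations defining `K₀` of `pres(𝒥)`: `[Q] = [P] + [R]` for every short exact
sequence `0 → P → Q → R → 0` of `𝒥`-presentable functors. -/
def K0PresRelations : Set (FreeAbelianGroup (PresObj a b K)) :=
  {x | ∃ (P Q R : PresObj a b K) (κ : P.1 ⟶ Q.1) (ρ : Q.1 ⟶ R.1),
    (∀ u, Function.Injective (κ.app u)) ∧ (∀ u, Function.Surjective (ρ.app u)) ∧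
    (∀ u, Function.Exact (κ.app u) (ρ.app u)) ∧
    x = FreeAbelianGroup.of Q - FreeAbelianGroup.of P - FreeAbelianGroup.of R}

/-- The Grothendieck group `K₀(pres 𝒥)`. -/
def K0Pres : Type 1 :=
  FreeAbelianGroup (PresObj a b K) ⧸ AddSubgroup.closure (K0PresRelations a b K)

instance : AddCommGroup (K0Pres a b K) := by unfold K0Pres; infer_instance

/-- The class `[G] ∈ K₀(pres 𝒥)`. -/
def K0PresMk (G : PresObj a b K) : K0Pres a b K :=
  QuotientAddGroup.mk (FreeAbelianGroup.of G)

/-- The abelian group `G(𝔹)` of admissible Euler functions. -/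
def eulerGroup : AddSubgroup (Strip a b → ℤ) where
  carrier := {μ | AdmissibleEuler a b μ}
  zero_mem' := by
    refine ⟨fun v _ => rfl, ⟨0, fun v _ => rfl⟩, fun u => ?_⟩
    convert Set.finite_empty
    ext v; simp
  add_mem' := by
    rintro μ ν ⟨h1, ⟨c1, h2⟩, h3⟩ ⟨h1', ⟨c2, h2'⟩, h3'⟩
    refine ⟨fun v hv => ?_, ⟨max c1 c2, fun v hv => ?_⟩, fun u => ?_⟩
    · simp only [Pi.add_apply]
      rw [show μ v = 0 by simpa using h1 v hv, show ν v = 0 by simpa using h1' v hv]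
      rfl
    · simp only [Pi.add_apply]
      rw [show μ v = 0 by simpa using h2 v (lt_of_le_of_lt (le_max_left _ _) hv),
        show ν v = 0 by simpa using h2' v (lt_of_le_of_lt (le_max_right _ _) hv)]
      rfl
    · refine Set.Finite.subset ((h3 u).union (h3' u)) ?_
      rintro v ⟨hb, hne⟩
      by_cases hμ : μ v = 0
      · exact Or.inr ⟨hb, by simp only [Pi.add_apply, hμ, zero_add] at hne; simpa using hne⟩
      · exact Or.inl ⟨hb, by simpa using hμ⟩
  neg_mem' := by
    rintro μ ⟨h1, h2, h3⟩
    refine ⟨fun v hv => ?_, ?_, fun u => ?_⟩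
    · simp only [Pi.neg_apply, Int.natAbs_neg]; exact h1 v hv
    · obtain ⟨c, hc⟩ := h2
      exact ⟨c, fun v hv => by simp only [Pi.neg_apply, Int.natAbs_neg]; exact hc v hv⟩
    · refine Set.Finite.subset (h3 u) ?_
      rintro v ⟨hb, hne⟩
      exact ⟨hb, by simpa [Int.natAbs_neg] using hne⟩

/-- Subfunctors of a functor `G : Mᵒᵖ ⥤ Vect_K`. -/
def Subfunctor (G : (Strip a b)ᵒᵖ ⥤ ModuleCat K) : Type :=
  {S : ∀ u : Strip a b, Submodule K (G.obj (op u)) //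
    ∀ (u u' : Strip a b) (h : u' ≤ u), Submodule.map (seqMap G h).hom (S u) ≤ S u'}

end More

end

/-! Choose a point `u₀` where `G` is proper and a nonzero functional `l₀` on `F u₀` killing
`G u₀`. By Zorn's lemma there is a maximal point `w ≥ u₀` at which `l₀ ∘ F(u₀ ≤ w)` is nonzero:
vanishing on `∂M` confines such points to a bounded region, so a chain of them has a supremum
approached by an increasing sequence, and sequential continuity together with the Mittag-Leffler
property of pointwise finite-dimensional inverse sequences shows that the supremum still
qualifies. At a maximal `w` the functional `l₀ ∘ F(u₀ ≤ w)` kills `G w` and every image from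
strictly above `w`, hence defines an epimorphism `F ⟶ S_w` vanishing on `G`. -/

open Filter Topology

section SeqMap

variable {a b : ℝ} {K : Type} [Field K] (F : (Strip a b)ᵒᵖ ⥤ ModuleCat K)

lemma seqMap_comp {x y z : Strip a b} (hxy : x ≤ y) (hyz : y ≤ z) :
    seqMap F hyz ≫ seqMap F hxy = seqMap F (hxy.trans hyz) := by
  simp only [seqMap, ← F.map_comp]
  rfl

lemma seqMap_seqMap_apply {x y z : Strip a b} (hxy : x ≤ y) (hyz : y ≤ z) (t : F.obj (op z)) :
    seqMap F hxy (seqMap F hyz t) = seqMap F (hxy.trans hyz) t := by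
  rw [← seqMap_comp F hxy hyz]
  rfl

lemma seqMap_self {x : Strip a b} (h : x ≤ x) : seqMap F h = 𝟙 _ := by
  simp only [seqMap, homOfLE_refl, op_id, F.map_id]

lemma map_eq_seqMap {x y : (Strip a b)ᵒᵖ} (f : x ⟶ y) : F.map f = seqMap F (leOfHom f.unop) :=
  rfl

lemma range_seqMap_le_range_seqMap {x y z : Strip a b} (hxy : x ≤ y) (hyz : y ≤ z) :
    LinearMap.range (seqMap F (hxy.trans hyz)).hom ≤ LinearMap.range (seqMap F hxy).hom := by
  rw [← seqMap_comp F hxy hyz, ModuleCat.hom_comp]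
  exact LinearMap.range_comp_le_range _ _

end SeqMap

section MittagLeffler

variable {a b : ℝ} {K : Type} [Field K] {F : (Strip a b)ᵒᵖ ⥤ ModuleCat K}
  {u : ℕ → Strip a b}

variable (F) in
def eventualRange (hu : Monotone u) (k : ℕ) : Submodule K (F.obj (op (u k))) :=
  ⨅ (m) (h : k ≤ m), LinearMap.range (seqMap F (hu h)).hom

lemma mem_eventualRange_iff (hu : Monotone u) {k : ℕ} {z : F.obj (op (u k))} :
    z ∈ eventualRange F hu k ↔ ∀ m (h : k ≤ m), z ∈ LinearMap.range (seqMap F (hu h)).hom := by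
  simp only [eventualRange, Submodule.mem_iInf]

lemma exists_eventualRange_eq_range (hpfd : Pfd a b K F) (hu : Monotone u) (k : ℕ) :
    ∃ (N : ℕ) (hN : k ≤ N), eventualRange F hu k = LinearMap.range (seqMap F (hu hN)).hom := by
  have := hpfd (u k)
  let ranges : ℕ →o (Submodule K (F.obj (op (u k))))ᵒᵈ :=
    ⟨fun n => OrderDual.toDual (LinearMap.range (seqMap F (hu (k.le_add_right n))).hom),
      fun n n' hn => range_seqMap_le_range_seqMap F (hu (k.le_add_right n)) (hu (by omega))⟩
  obtain ⟨n, hn⟩ := IsArtinian.monotone_stabilizes ranges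
  refine ⟨k + n, k.le_add_right n,
    le_antisymm (iInf₂_le (k + n) (k.le_add_right n)) (le_iInf₂ fun m hm => ?_)⟩
  obtain ⟨j, rfl⟩ := Nat.exists_eq_add_of_le hm
  have hstable : ranges n = ranges (max n j) := hn _ (le_max_left n j)
  calc LinearMap.range (seqMap F (hu (k.le_add_right n))).hom
      = LinearMap.range (seqMap F (hu (k.le_add_right (max n j)))).hom := hstable
    _ ≤ LinearMap.range (seqMap F (hu hm)).hom :=
      range_seqMap_le_range_seqMap F (hu hm) (hu (by omega))

lemma exists_seqMap_eq_of_mem_eventualRange (hpfd : Pfd a b K F) (hu : Monotone u) {k : ℕ}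
    {z : F.obj (op (u k))} (hz : z ∈ eventualRange F hu k) :
    ∃ z' ∈ eventualRange F hu (k + 1), seqMap F (hu k.le_succ) z' = z := by
  obtain ⟨N, hN, hrange⟩ := exists_eventualRange_eq_range hpfd hu (k + 1)
  obtain ⟨t, rfl⟩ := (mem_eventualRange_iff hu).1 hz N (by omega)
  exact ⟨seqMap F (hu hN) t, hrange ▸ ⟨t, rfl⟩, seqMap_seqMap_apply F _ _ t⟩

lemma exists_compatible_family_of_mem_eventualRange (hpfd : Pfd a b K F) (hu : Monotone u)
    {z : F.obj (op (u 0))} (hz : z ∈ eventualRange F hu 0) :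
    ∃ x : ∀ k, F.obj (op (u k)), x 0 = z ∧ ∀ k, seqMap F (hu k.le_succ) (x (k + 1)) = x k := by
  choose lift hlift_mem hlift using fun k (z : eventualRange F hu k) =>
    exists_seqMap_eq_of_mem_eventualRange hpfd hu z.2
  let x : ∀ k, eventualRange F hu k := fun k =>
    Nat.rec ⟨z, hz⟩ (fun k xk => ⟨lift k xk, hlift_mem k xk⟩) k
  exact ⟨fun k => (x k).1, rfl, fun k => hlift k (x k)⟩

lemma comp_seqMap_ne_zero_of_tendsto (hpfd : Pfd a b K F) (hseq : SeqContinuousF a b K F)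
    (hu : Monotone u) {L : Strip a b} (hle : ∀ k, u k ≤ L)
    (hL : Tendsto (fun k => (u k).1) atTop (𝓝 L.1)) (l : F.obj (op (u 0)) →ₗ[K] K)
    (hl : ∀ k : ℕ, l ∘ₗ (seqMap F (hu k.zero_le)).hom ≠ 0) :
    l ∘ₗ (seqMap F (hle 0)).hom ≠ 0 := by
  obtain ⟨N, hN, hrange⟩ := exists_eventualRange_eq_range hpfd hu 0
  obtain ⟨t, ht⟩ : ∃ t, l (seqMap F (hu hN) t) ≠ 0 := by
    by_contra! h
    exact hl N (LinearMap.ext h)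
  obtain ⟨x, hx0, hx⟩ := exists_compatible_family_of_mem_eventualRange hpfd hu
    (hrange ▸ ⟨t, rfl⟩ : seqMap F (hu hN) t ∈ eventualRange F hu 0)
  obtain ⟨y, hy, -⟩ := hseq u hu L hle hL x hx
  intro h
  apply ht
  rw [← hx0, ← hy 0]
  exact LinearMap.congr_fun h y

end MittagLeffler

namespace Strip

variable {a b : ℝ} {C : Set (Strip a b)}

lemma exists_near_sInf_sSup (hC : IsChain (· ≤ ·) C) (hne : C.Nonempty) {ε : ℝ} (hε : 0 < ε) :
    ∃ p ∈ C, p.1.1 < sInf ((fun p => p.1.1) '' C) + ε ∧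
      sSup ((fun p => p.1.2) '' C) - ε < p.1.2 := by
  obtain ⟨_, ⟨p, hp, rfl⟩, hpx⟩ := exists_lt_of_csInf_lt (hne.image _) (lt_add_of_pos_right _ hε)
  obtain ⟨_, ⟨q, hq, rfl⟩, hqy⟩ := exists_lt_of_lt_csSup (hne.image _) (sub_lt_self _ hε)
  rcases hC.total hp hq with hpq | hqp
  · exact ⟨q, hq, (le_def.1 hpq).1.trans_lt hpx, hqy⟩
  · exact ⟨p, hp, hpx, hqy.trans_le (le_def.1 hqp).2⟩

lemma exists_monotone_tendsto_of_isChain (hC : IsChain (· ≤ ·) C) (hne : C.Nonempty)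
    (hx : BddBelow ((fun p => p.1.1) '' C)) (hy : BddAbove ((fun p => p.1.2) '' C)) :
    ∃ L : Strip a b, (∀ p ∈ C, p ≤ L) ∧ ∃ u : ℕ → Strip a b, Monotone u ∧ (∀ k, u k ∈ C) ∧
      Tendsto (fun k => (u k).1) atTop (𝓝 L.1) := by
  set X := sInf ((fun p => p.1.1) '' C)
  set Y := sSup ((fun p => p.1.2) '' C)
  have hX : ∀ p ∈ C, X ≤ p.1.1 := fun p hp => csInf_le hx ⟨p, hp, rfl⟩
  have hY : ∀ p ∈ C, p.1.2 ≤ Y := fun p hp => le_csSup hy ⟨p, hp, rfl⟩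
  have hXY : a ≤ X + Y ∧ X + Y ≤ b := by
    refine ⟨?_, ?_⟩
    · have : a - Y ≤ X := le_csInf (hne.image _) (by
        rintro _ ⟨q, hq, rfl⟩; linarith [q.2.1, hY q hq])
      linarith
    · have : Y ≤ b - X := csSup_le (hne.image _) (by
        rintro _ ⟨q, hq, rfl⟩; linarith [q.2.2, hX q hq])
      linarith
  have hnear (k : ℕ) : ∃ p ∈ C, p.1.1 < X + 1 / (k + 1) ∧ Y - 1 / (k + 1) < p.1.2 :=
    exists_near_sInf_sSup hC hne Nat.one_div_pos_of_nat
  choose cs hcsC hcs using hnear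
  have hdir : Directed (· ≤ ·) cs := fun i j =>
    (hC.total (hcsC i) (hcsC j)).elim (fun h => ⟨j, h, le_rfl⟩) (fun h => ⟨i, le_rfl, h⟩)
  set u := cs ∘ hdir.sequence cs
  have hcs_le (k : ℕ) : cs k ≤ u (k + 1) := hdir.le_sequence k
  refine ⟨⟨(X, Y), hXY⟩, fun p hp => ⟨hX p hp, hY p hp⟩, u, hdir.sequence_mono,
    fun k => hcsC _, ?_⟩
  have hε := tendsto_one_div_add_atTop_nhds_zero_nat (𝕜 := ℝ)
  refine Tendsto.prodMk_nhds ?_ ?_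
  · rw [← tendsto_add_atTop_iff_nat 1]
    refine tendsto_of_tendsto_of_tendsto_of_le_of_le (h := fun k : ℕ => X + 1 / ((k : ℝ) + 1))
      tendsto_const_nhds (by simpa using hε.const_add X) (fun k => hX _ (hcsC _)) (fun k => ?_)
    linarith [(le_def.1 (hcs_le k)).1, (hcs k).1]
  · rw [← tendsto_add_atTop_iff_nat 1]
    refine tendsto_of_tendsto_of_tendsto_of_le_of_le (g := fun k : ℕ => Y - 1 / ((k : ℝ) + 1))
      (by simpa using hε.const_sub Y) tendsto_const_nhds (fun k => ?_) (fun k => hY _ (hcsC _))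
    linarith [(le_def.1 (hcs_le k)).2, (hcs k).2]

end Strip

section NonvanishingAbove

variable {a b : ℝ} {K : Type} [Field K] {F : (Strip a b)ᵒᵖ ⥤ ModuleCat K}

lemma seqMap_eq_zero_of_onBoundary (hvan : VanishesOnBoundary a b K F) {x y z : Strip a b}
    (hxy : x ≤ y) (hyz : y ≤ z) (hy : Strip.OnBoundary y) : seqMap F (hxy.trans hyz) = 0 := by
  ext t
  rw [← seqMap_seqMap_apply F hxy hyz, hvan y hy (seqMap F hyz t), map_zero]
  rfl

variable (F) in
def nonvanishingAbove {u₀ : Strip a b} (l₀ : F.obj (op u₀) →ₗ[K] K) : Set (Strip a b) :=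
  {w | ∃ h : u₀ ≤ w, l₀ ∘ₗ (seqMap F h).hom ≠ 0}

variable {u₀ : Strip a b} {l₀ : F.obj (op u₀) →ₗ[K] K}

lemma bounds_of_mem_nonvanishingAbove (hvan : VanishesOnBoundary a b K F) {w : Strip a b}
    (hw : w ∈ nonvanishingAbove F l₀) : a - u₀.1.2 < w.1.1 ∧ w.1.2 < b - u₀.1.1 := by
  obtain ⟨h, hne⟩ := hw
  have hu₀ := u₀.2
  have huw := Strip.le_def.1 h
  refine ⟨lt_of_not_ge fun hx => hne ?_, lt_of_not_ge fun hy => hne ?_⟩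
  · let q : Strip a b := ⟨(a - u₀.1.2, u₀.1.2), by simp only; constructor <;> linarith⟩
    have hzero : seqMap F h = 0 := seqMap_eq_zero_of_onBoundary hvan (x := u₀) (y := q) (z := w)
      ⟨by simp only [q]; linarith, le_rfl⟩ ⟨hx, huw.2⟩ (Or.inl (by simp only [q]; ring))
    simp [hzero]
  · let q : Strip a b := ⟨(u₀.1.1, b - u₀.1.1), by simp only; constructor <;> linarith⟩
    have hzero : seqMap F h = 0 := seqMap_eq_zero_of_onBoundary hvan (x := u₀) (y := q) (z := w)
      ⟨le_rfl, by simp only [q]; linarith⟩ ⟨huw.1, hy⟩ (Or.inr (by simp only [q]; ring))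
    simp [hzero]

lemma exists_ub_of_isChain_nonvanishingAbove (hpfd : Pfd a b K F)
    (hseq : SeqContinuousF a b K F) (hvan : VanishesOnBoundary a b K F) {c : Set (Strip a b)}
    (hcS : c ⊆ nonvanishingAbove F l₀) (hc : IsChain (· ≤ ·) c) (hne : c.Nonempty) :
    ∃ L ∈ nonvanishingAbove F l₀, ∀ w ∈ c, w ≤ L := by
  have hbdd (w : Strip a b) (hw : w ∈ c) := bounds_of_mem_nonvanishingAbove hvan (hcS hw)
  obtain ⟨L, hL, u, hu, huc, hlim⟩ := Strip.exists_monotone_tendsto_of_isChain hc hne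
    ⟨a - u₀.1.2, by rintro _ ⟨w, hw, rfl⟩; exact (hbdd w hw).1.le⟩
    ⟨b - u₀.1.1, by rintro _ ⟨w, hw, rfl⟩; exact (hbdd w hw).2.le⟩
  obtain ⟨h₀, -⟩ := hcS (huc 0)
  refine ⟨L, ⟨h₀.trans (hL _ (huc 0)), ?_⟩, hL⟩
  have key := comp_seqMap_ne_zero_of_tendsto hpfd hseq hu (fun k => hL _ (huc k)) hlim
    (l₀ ∘ₗ (seqMap F h₀).hom) fun k => by
      obtain ⟨_, hk⟩ := hcS (huc k)
      rwa [LinearMap.comp_assoc, ← ModuleCat.hom_comp, seqMap_comp]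
  rwa [LinearMap.comp_assoc, ← ModuleCat.hom_comp, seqMap_comp] at key

lemma exists_maximal_nonvanishingAbove (hpfd : Pfd a b K F) (hseq : SeqContinuousF a b K F)
    (hvan : VanishesOnBoundary a b K F) (hl₀ : l₀ ≠ 0) :
    ∃ w, Maximal (· ∈ nonvanishingAbove F l₀) w := by
  have hu₀ : u₀ ∈ nonvanishingAbove F l₀ :=
    ⟨le_rfl, by rwa [seqMap_self, ModuleCat.hom_id, LinearMap.comp_id]⟩
  obtain ⟨w, -, hw⟩ := zorn_le_nonempty₀ _ (fun c hcS hc y hy =>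
    exists_ub_of_isChain_nonvanishingAbove hpfd hseq hvan hcS hc ⟨y, hy⟩) u₀ hu₀
  exact ⟨w, hw⟩

lemma exists_functional_vanishing_above (hpfd : Pfd a b K F) (hseq : SeqContinuousF a b K F)
    (hvan : VanishesOnBoundary a b K F) (G : Subfunctor a b K F)
    (hproper : ∃ u : Strip a b, G.1 u ≠ ⊤) :
    ∃ (w : Strip a b) (l : F.obj (op w) →ₗ[K] K), l ≠ 0 ∧ (∀ x ∈ G.1 w, l x = 0) ∧
      ∀ v (h : w ≤ v), v ≠ w → l ∘ₗ (seqMap F h).hom = 0 := by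
  obtain ⟨u₀, hu₀⟩ := hproper
  have := hpfd u₀
  obtain ⟨l₀, hl₀, hGl₀⟩ := (G.1 u₀).exists_le_ker_of_lt_top hu₀.lt_top
  obtain ⟨w, ⟨h, hw⟩, hmax⟩ := exists_maximal_nonvanishingAbove hpfd hseq hvan hl₀
  refine ⟨w, l₀ ∘ₗ (seqMap F h).hom, hw,
    fun x hx => hGl₀ (G.2 w u₀ h (Submodule.mem_map_of_mem hx)), fun v hwv hne => ?_⟩
  rw [LinearMap.comp_assoc, ← ModuleCat.hom_comp, seqMap_comp]
  by_contra hv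
  exact hne (le_antisymm (hmax ⟨h.trans hwv, hv⟩ hwv) hwv)

end NonvanishingAbove

section ToSimple

variable {a b : ℝ} {K : Type} [Field K] {F : (Strip a b)ᵒᵖ ⥤ ModuleCat K} {w : Strip a b}

def toSimpleF (l : F.obj (op w) →ₗ[K] K)
    (hl : ∀ v (h : w ≤ v), v ≠ w → l ∘ₗ (seqMap F h).hom = 0) : F ⟶ SimpleF a b K w where
  app u := ModuleCat.ofHom (LinearMap.pi fun h : PLift (u.unop = w) =>
    l ∘ₗ (seqMap F h.down.ge).hom)
  naturality x y f := by
    ext t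
    funext ⟨hy⟩
    change l (seqMap F hy.ge (F.map f t)) =
      condMap a b K (fun u => u = w) y.unop x.unop (fun h => l (seqMap F h.down.ge t)) ⟨hy⟩
    rw [condMap_apply, map_eq_seqMap, seqMap_seqMap_apply]
    split_ifs with hx
    · rfl
    · exact LinearMap.congr_fun (hl _ _ hx) t

variable {l : F.obj (op w) →ₗ[K] K} {hl : ∀ v (h : w ≤ v), v ≠ w → l ∘ₗ (seqMap F h).hom = 0}

lemma toSimpleF_app_apply (u : Strip a b) (t : F.obj (op u)) (h : PLift (u = w)) :
    (toSimpleF l hl).app (op u) t h = l (seqMap F h.down.ge t) :=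
  rfl

lemma surjective_toSimpleF_app (hl₀ : l ≠ 0) (u : (Strip a b)ᵒᵖ) :
    Function.Surjective ((toSimpleF l hl).app u) := by
  obtain ⟨t₀, ht₀⟩ : ∃ t₀, l t₀ ≠ 0 := by
    by_contra! h
    exact hl₀ (LinearMap.ext h)
  obtain ⟨u⟩ := u
  intro s
  by_cases hu : u = w
  · subst hu
    refine ⟨(s ⟨rfl⟩ / l t₀) • t₀, funext fun h => ?_⟩
    rw [toSimpleF_app_apply, seqMap_self, ModuleCat.id_apply, map_smul, smul_eq_mul,
      div_mul_cancel₀ _ ht₀]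
  · exact ⟨0, funext fun h => absurd h.down hu⟩

end ToSimple

/-- a proper subfunctor of a pfd sequentially continuous functor lies in the
kernel of a natural epimorphism onto some simple functor. -/
theorem proper_subfunctor_killed_by_simple_quotient (a b : ℝ) (K : Type) [Field K]
    (F : (Strip a b)ᵒᵖ ⥤ ModuleCat K)
    (hpfd : Pfd a b K F) (hseq : SeqContinuousF a b K F)
    (hvan : VanishesOnBoundary a b K F)
    (G : Subfunctor a b K F) (hproper : ∃ u : Strip a b, G.1 u ≠ ⊤) :
    ∃ (w : Strip a b) (ρ : F ⟶ SimpleF a b K w),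
      (∀ u : (Strip a b)ᵒᵖ, Function.Surjective (ρ.app u)) ∧
      (∀ u : Strip a b, ∀ x ∈ G.1 u, ρ.app (op u) x = 0) := by
  obtain ⟨w, l, hl₀, hlG, hl⟩ := exists_functional_vanishing_above hpfd hseq hvan G hproper
  refine ⟨w, toSimpleF l hl, surjective_toSimpleF_app hl₀, fun u x hx => funext fun h => ?_⟩
  rw [toSimpleF_app_apply]
  exact hlG _ (G.2 u w h.down.ge (Submodule.mem_map_of_mem hx))
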